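/- Let G be a ground well-formed g-choreography with ⟦G⟧ ≠ ε. Then for every maximal configuration x ∈ MaxC(⟦G⟧): (1) the set of minimal events of x is nonempty and all their labels are output labels (in L^!), and the set of maximal events of x is nonempty and all their labels are input labels (in L^?); (2) the set of subjects of the labels of the events of x equals P(G). -/

import Mathlib

open scoped Classical

namespace Choreo

/-! ## Labels -/

/-- Communication labels: output `A B!m` and input `A B?m`. -/
inductive Label (P M : Type) where
  | out : P → P → M → Label P M
  | inp : P → P → M → Label P M

variable {P M : Type}

/-- The subject of a label: the sender of an output, the receiver of an input. -/
def Label.sbj : Label P M → P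
  | .out a _ _ => a
  | .inp _ b _ => b

/-- The set `L^!` of output labels (sender and receiver distinct). -/
def Lout : Set (Label P M) := {l | ∃ a b m, a ≠ b ∧ l = .out a b m}

/-- The set `L^?` of input labels (sender and receiver distinct). -/
def Lin : Set (Label P M) := {l | ∃ a b m, a ≠ b ∧ l = .inp a b m}

/-- `L̂(A)`: the labels in `L` whose subject is `A`. -/
def hat (L : Set (Label P M)) (A : P) : Set (Label P M) := {l ∈ L | l.sbj = A}

/-- `sbj(L)`: the set of subjects of the labels in `L`. -/
def sbjSet (L : Set (Label P M)) : Set P := Label.sbj '' L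

/-- `L − Π`: the labels in `L` whose subject is not in `Π`. -/
def lminus (L : Set (Label P M)) (Γ : Set P) : Set (Label P M) := {l ∈ L | l.sbj ∉ Γ}

/-! ## Labelled event structures (events drawn from ℕ) -/

/-- Data of a labelled (prime) event structure over events drawn from `ℕ`. -/
structure ES (P M : Type) where
  ev : Set ℕ
  le : ℕ → ℕ → Prop
  conf : ℕ → ℕ → Prop
  lbl : ℕ → Label P M

namespace ES

variable (E : ES P M)

/-- Configurations: downward-closed conflict-free sets of events. -/
def Config (x : Set ℕ) : Prop :=
  x ⊆ E.ev ∧ (∀ e ∈ x, ∀ f ∈ E.ev, E.le f e → f ∈ x) ∧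
    ∀ e ∈ x, ∀ f ∈ x, ¬ E.conf e f

/-- `MaxC E`: the ⊆-maximal configurations of `E`. -/
def MaxC : Set (Set ℕ) := {x | E.Config x ∧ ∀ y, E.Config y → x ⊆ y → y = x}

/-- Minimal events of `s ⊆ E.ev` with respect to `E.le`. -/
def minIn (s : Set ℕ) : Set ℕ := {e ∈ s | ∀ f ∈ s, E.le f e → f = e}

/-- Maximal events of `s ⊆ E.ev` with respect to `E.le`. -/
def maxIn (s : Set ℕ) : Set ℕ := {e ∈ s | ∀ f ∈ s, E.le e f → f = e}

def minEv : Set ℕ := E.minIn E.ev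
def maxEv : Set ℕ := E.maxIn E.ev

/-- Labels of the minimal events of `E`. -/
def minLbl : Set (Label P M) := E.lbl '' E.minEv

/-- Labels of the maximal events of `E`. -/
def maxLbl : Set (Label P M) := E.lbl '' E.maxEv

/-- All labels occurring in `E`. -/
def lblSet : Set (Label P M) := E.lbl '' E.ev

/-- The projection `E↾A`: the restriction of `E` to the events whose label has subject `A`. -/
def proj (A : P) : ES P M where
  ev := {e ∈ E.ev | (E.lbl e).sbj = A}
  le u v := E.le u v ∧ (u ∈ E.ev ∧ (E.lbl u).sbj = A) ∧ (v ∈ E.ev ∧ (E.lbl v).sbj = A)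
  conf u v := E.conf u v ∧ (u ∈ E.ev ∧ (E.lbl u).sbj = A) ∧ (v ∈ E.ev ∧ (E.lbl v).sbj = A)
  lbl := E.lbl

/-- The projection `x↾A` of a configuration (as a set of events of `E`). -/
def projC (x : Set ℕ) (A : P) : Set ℕ := {e ∈ x | (E.lbl e).sbj = A}

end ES

/-! ## Constructions on event structures -/

/-- Tag for the events of a left component. -/
def tagL (e : ℕ) : ℕ := Nat.pair 0 e
/-- Tag for the events of a right component. -/
def tagR (e : ℕ) : ℕ := Nat.pair 1 e
/-- Tag for the events of the copy of the second component indexed by (the code of) a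
maximal configuration of the first one. -/
def tagC (k e : ℕ) : ℕ := Nat.pair 1 (Nat.pair k e)

/-- A code (injective on finite sets) of sets of naturals. -/
noncomputable def encSet (x : Set ℕ) : ℕ :=
  if h : x.Finite then h.toFinset.sum (fun n => 2 ^ n) else 0

/-- The empty event structure `ε`. -/
noncomputable def esEmpty [Nonempty P] [Nonempty M] : ES P M where
  ev := ∅
  le _ _ := False
  conf _ _ := False
  lbl _ := Label.out Classical.ofNonempty Classical.ofNonempty Classical.ofNonempty

/-- `⟦A→B:m⟧`: two ordered events labelled `A B!m < A B?m`. -/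
def esAct (a b : P) (m : M) : ES P M where
  ev := {0, 1}
  le u v := (u = 0 ∧ v = 0) ∨ (u = 0 ∧ v = 1) ∨ (u = 1 ∧ v = 1)
  conf _ _ := False
  lbl e := if e = 0 then Label.out a b m else Label.inp a b m

/-- Tensor product `E1 ⊗ E2` (componentwise disjoint union). -/
def esTensor (E1 E2 : ES P M) : ES P M where
  ev := (tagL '' E1.ev) ∪ (tagR '' E2.ev)
  le u v := (∃ e ∈ E1.ev, ∃ f ∈ E1.ev, E1.le e f ∧ u = tagL e ∧ v = tagL f) ∨
            (∃ e ∈ E2.ev, ∃ f ∈ E2.ev, E2.le e f ∧ u = tagR e ∧ v = tagR f)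
  conf u v := (∃ e ∈ E1.ev, ∃ f ∈ E1.ev, E1.conf e f ∧ u = tagL e ∧ v = tagL f) ∨
              (∃ e ∈ E2.ev, ∃ f ∈ E2.ev, E2.conf e f ∧ u = tagR e ∧ v = tagR f)
  lbl u := if (Nat.unpair u).1 = 0 then E1.lbl (Nat.unpair u).2 else E2.lbl (Nat.unpair u).2

/-- Sum `E1 + E2`: disjoint union with all cross pairs of events in conflict. -/
def esSum (E1 E2 : ES P M) : ES P M :=
  { esTensor E1 E2 with
    conf := fun u v => (esTensor E1 E2).conf u v ∨
      (∃ e ∈ E1.ev, ∃ f ∈ E2.ev, (u = tagL e ∧ v = tagR f) ∨ (u = tagR f ∧ v = tagL e)) }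

/-- Sequential composition: appends to each maximal configuration `x` of `E1` a disjoint
copy of `E2`, ordering an event of `x` below an event of the copy whenever their labels
have the same subject. -/
noncomputable def esSeq (E1 E2 : ES P M) : ES P M where
  ev := (tagL '' E1.ev) ∪ {u | ∃ x ∈ E1.MaxC, ∃ e ∈ E2.ev, u = tagC (encSet x) e}
  le u v :=
    (∃ e ∈ E1.ev, ∃ f ∈ E1.ev, E1.le e f ∧ u = tagL e ∧ v = tagL f) ∨
    (∃ x ∈ E1.MaxC, ∃ e ∈ E2.ev, ∃ f ∈ E2.ev, E2.le e f ∧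
       u = tagC (encSet x) e ∧ v = tagC (encSet x) f) ∨
    (∃ x ∈ E1.MaxC, ∃ e ∈ x, ∃ f ∈ E2.ev, (E1.lbl e).sbj = (E2.lbl f).sbj ∧
       u = tagL e ∧ v = tagC (encSet x) f)
  conf u v :=
    (∃ e ∈ E1.ev, ∃ f ∈ E1.ev, E1.conf e f ∧ u = tagL e ∧ v = tagL f) ∨
    (∃ x ∈ E1.MaxC, ∃ e ∈ E2.ev, ∃ f ∈ E2.ev, E2.conf e f ∧
       u = tagC (encSet x) e ∧ v = tagC (encSet x) f) ∨
    (∃ x ∈ E1.MaxC, ∃ x' ∈ E1.MaxC, x ≠ x' ∧ ∃ e ∈ E2.ev, ∃ f ∈ E2.ev,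
       u = tagC (encSet x) e ∧ v = tagC (encSet x') f) ∨
    (∃ x ∈ E1.MaxC, ∃ e ∈ E1.ev, (∃ e' ∈ x, E1.conf e e') ∧ ∃ f ∈ E2.ev,
       ((u = tagL e ∧ v = tagC (encSet x) f) ∨ (u = tagC (encSet x) f ∧ v = tagL e)))
  lbl u := if (Nat.unpair u).1 = 0 then E1.lbl (Nat.unpair u).2
           else E2.lbl (Nat.unpair (Nat.unpair u).2).2

/-! ## Well-branchedness -/

/-- Labels of the minimal events of the projection `E↾A`. -/
def minLblP (E : ES P M) (A : P) : Set (Label P M) := (E.proj A).minLbl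

/-- `A` is active for the branches `E1`, `E2`. -/
def active (E1 E2 : ES P M) (A : P) : Prop :=
  minLblP E1 A ≠ ∅ ∧ minLblP E2 A ≠ ∅ ∧
  Disjoint (minLblP E1 A) (minLblP E2 A) ∧
  minLblP E1 A ∪ minLblP E2 A ⊆ Lout

/-- `B` is passive for the branches `E1`, `E2`. -/
def passive (E1 E2 : ES P M) (B : P) : Prop :=
  Disjoint (minLblP E1 B) (minLblP E2 B) ∧
  minLblP E1 B ∪ minLblP E2 B ⊆ Lin ∧
  (minLblP E1 B = ∅ ↔ minLblP E2 B = ∅)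

/-- Well-branchedness: a unique active participant, all other participants passive. -/
def wb (E1 E2 : ES P M) : Prop :=
  ∃ A, active E1 E2 A ∧ (∀ A', active E1 E2 A' → A' = A) ∧
    ∀ B, B ≠ A → passive E1 E2 B

/-! ## Ground g-choreographies and their semantics -/

/-- Ground g-choreographies: `G ::= 0 | A→B:m | G;G | G|G | G+G`. -/
inductive GC (P M : Type) where
  | nil : GC P M
  | act : P → P → M → GC P M
  | seq : GC P M → GC P M → GC P M
  | par : GC P M → GC P M → GC P M
  | cho : GC P M → GC P M → GC P M

/-- `P(G)`: the participants occurring in `G`. -/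
def parts : GC P M → Set P
  | .nil => ∅
  | .act a b _ => {a, b}
  | .seq g1 g2 => parts g1 ∪ parts g2
  | .par g1 g2 => parts g1 ∪ parts g2
  | .cho g1 g2 => parts g1 ∪ parts g2

/-- The semantics `⟦G⟧`: a labelled event structure, or `none` (i.e. `⊥`) when a side
condition fails (the grammar requires `A ≠ B` in interactions; parallel requires disjoint
label sets; choice requires well-branchedness). -/
noncomputable def gsem [Nonempty P] [Nonempty M] : GC P M → Option (ES P M)
  | .nil => some esEmpty
  | .act a b m => if a = b then none else some (esAct a b m)
  | .seq g1 g2 =>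
      match gsem g1, gsem g2 with
      | some E1, some E2 => some (esSeq E1 E2)
      | _, _ => none
  | .par g1 g2 =>
      match gsem g1, gsem g2 with
      | some E1, some E2 =>
          if Disjoint E1.lblSet E2.lblSet then some (esTensor E1 E2) else none
      | _, _ => none
  | .cho g1 g2 =>
      match gsem g1, gsem g2 with
      | some E1, some E2 => if wb E1 E2 then some (esSum E1 E2) else none
      | _, _ => none

/-! ## The typing system -/

/-- Output uniform sets of labels. -/
def outUniform (U V : Set (Label P M)) : Prop := Disjoint U V ∧ U ∪ V ⊆ Lout

/-- Input uniform sets of labels. -/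
def inUniform (U V : Set (Label P M)) : Prop := Disjoint U V ∧ U ∪ V ⊆ Lin

/-- The compatibility condition `compch(φ1,φ2,Π)` of rule t-ch. -/
def compch (φ1 φ2 : Set (Label P M)) (Γ : Set P) : Prop :=
  ∃ A ∈ Γ,
    (outUniform (hat φ1 A) (hat φ2 A) ∧ hat φ1 A ≠ ∅ ∧ hat φ2 A ≠ ∅) ∧
    (∀ A' ∈ Γ, (outUniform (hat φ1 A') (hat φ2 A') ∧ hat φ1 A' ≠ ∅ ∧ hat φ2 A' ≠ ∅) →
        A' = A) ∧
    ∀ B ∈ Γ, B ≠ A →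
      inUniform (hat φ1 B) (hat φ2 B) ∧ (hat φ1 B = ∅ ↔ hat φ2 B = ∅)

/-- The typing judgement `Π ⊢ G : ⟨φ,Λ⟩`. -/
inductive Typing : Set P → GC P M → Set (Label P M) → Set (Label P M) → Prop where
  | temp : Typing ∅ GC.nil ∅ ∅
  | tint {a b : P} {m : M} (hab : a ≠ b) :
      Typing {a, b} (GC.act a b m)
        {Label.out a b m, Label.inp a b m} {Label.out a b m, Label.inp a b m}
  | tseq {Γ1 Γ2 : Set P} {g1 g2 : GC P M} {φ1 φ2 Λ1 Λ2 : Set (Label P M)} :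
      Typing Γ1 g1 φ1 Λ1 → Typing Γ2 g2 φ2 Λ2 →
      Typing (Γ1 ∪ Γ2) (GC.seq g1 g2) (φ1 ∪ lminus φ2 Γ1) (Λ2 ∪ lminus Λ1 Γ2)
  | tpar {Γ1 Γ2 : Set P} {g1 g2 : GC P M} {φ1 φ2 Λ1 Λ2 : Set (Label P M)} :
      Typing Γ1 g1 φ1 Λ1 → Typing Γ2 g2 φ2 Λ2 → Γ1 ∩ Γ2 = ∅ →
      Typing (Γ1 ∪ Γ2) (GC.par g1 g2) (φ1 ∪ φ2) (Λ1 ∪ Λ2)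
  | tch {Γ : Set P} {g1 g2 : GC P M} {φ1 φ2 Λ1 Λ2 : Set (Label P M)} :
      Typing Γ g1 φ1 Λ1 → Typing Γ g2 φ2 Λ2 → compch φ1 φ2 Γ →
      Typing Γ (GC.cho g1 g2) (φ1 ∪ φ2) (Λ1 ∪ Λ2)


/-! ## One-hole contexts and their typing (hole axiom `Γh ⊢ [·] : ⟨φh,Λh⟩`) -/

/-- g-choreography contexts with a single hole. -/
inductive Ctx (P M : Type) where
  | hole : Ctx P M
  | seqL : Ctx P M → GC P M → Ctx P M
  | seqR : GC P M → Ctx P M → Ctx P M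
  | parL : Ctx P M → GC P M → Ctx P M
  | parR : GC P M → Ctx P M → Ctx P M
  | choL : Ctx P M → GC P M → Ctx P M
  | choR : GC P M → Ctx P M → Ctx P M

/-- `C.fill g = C[g]`, the replacement of the hole of `C` by `g`. -/
def Ctx.fill : Ctx P M → GC P M → GC P M
  | .hole, g => g
  | .seqL c g2, g => GC.seq (c.fill g) g2
  | .seqR g1 c, g => GC.seq g1 (c.fill g)
  | .parL c g2, g => GC.par (c.fill g) g2
  | .parR g1 c, g => GC.par g1 (c.fill g)
  | .choL c g2, g => GC.cho (c.fill g) g2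
  | .choR g1 c, g => GC.cho g1 (c.fill g)

/-- Typing of one-hole contexts in the type system extended with the axiom
`Γh ⊢ [·] : ⟨φh,Λh⟩` for the hole. -/
inductive CTyping (Γh : Set P) (φh Λh : Set (Label P M)) :
    Set P → Ctx P M → Set (Label P M) → Set (Label P M) → Prop where
  | hole : CTyping Γh φh Λh Γh Ctx.hole φh Λh
  | seqL {Γ1 Γ2 : Set P} {c : Ctx P M} {g : GC P M} {φ1 φ2 Λ1 Λ2 : Set (Label P M)} :
      CTyping Γh φh Λh Γ1 c φ1 Λ1 → Typing Γ2 g φ2 Λ2 →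
      CTyping Γh φh Λh (Γ1 ∪ Γ2) (Ctx.seqL c g) (φ1 ∪ lminus φ2 Γ1) (Λ2 ∪ lminus Λ1 Γ2)
  | seqR {Γ1 Γ2 : Set P} {g : GC P M} {c : Ctx P M} {φ1 φ2 Λ1 Λ2 : Set (Label P M)} :
      Typing Γ1 g φ1 Λ1 → CTyping Γh φh Λh Γ2 c φ2 Λ2 →
      CTyping Γh φh Λh (Γ1 ∪ Γ2) (Ctx.seqR g c) (φ1 ∪ lminus φ2 Γ1) (Λ2 ∪ lminus Λ1 Γ2)
  | parL {Γ1 Γ2 : Set P} {c : Ctx P M} {g : GC P M} {φ1 φ2 Λ1 Λ2 : Set (Label P M)} :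
      CTyping Γh φh Λh Γ1 c φ1 Λ1 → Typing Γ2 g φ2 Λ2 → Γ1 ∩ Γ2 = ∅ →
      CTyping Γh φh Λh (Γ1 ∪ Γ2) (Ctx.parL c g) (φ1 ∪ φ2) (Λ1 ∪ Λ2)
  | parR {Γ1 Γ2 : Set P} {g : GC P M} {c : Ctx P M} {φ1 φ2 Λ1 Λ2 : Set (Label P M)} :
      Typing Γ1 g φ1 Λ1 → CTyping Γh φh Λh Γ2 c φ2 Λ2 → Γ1 ∩ Γ2 = ∅ →
      CTyping Γh φh Λh (Γ1 ∪ Γ2) (Ctx.parR g c) (φ1 ∪ φ2) (Λ1 ∪ Λ2)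
  | choL {Γ : Set P} {c : Ctx P M} {g : GC P M} {φ1 φ2 Λ1 Λ2 : Set (Label P M)} :
      CTyping Γh φh Λh Γ c φ1 Λ1 → Typing Γ g φ2 Λ2 → compch φ1 φ2 Γ →
      CTyping Γh φh Λh Γ (Ctx.choL c g) (φ1 ∪ φ2) (Λ1 ∪ Λ2)
  | choR {Γ : Set P} {g : GC P M} {c : Ctx P M} {φ1 φ2 Λ1 Λ2 : Set (Label P M)} :
      Typing Γ g φ1 Λ1 → CTyping Γh φh Λh Γ c φ2 Λ2 → compch φ1 φ2 Γ →
      CTyping Γh φh Λh Γ (Ctx.choR g c) (φ1 ∪ φ2) (Λ1 ∪ Λ2)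

/-! ## Refinable actions, t-ref, and refinement -/

/-- The three side conditions of the axiom schema t-ref for the refinable action
`A → m1…mn : B1,…,Bn`, represented by the initiator `A` and the nonempty list
`l = [(m1,B1),…,(mn,Bn)]` with pairwise distinct `Bi`. -/
def trefCond (Γ : Set P) (φ Λ : Set (Label P M)) (A : P) (l : List (M × P)) : Prop :=
  l ≠ [] ∧ (l.map Prod.snd).Nodup ∧
  sbjSet φ = Γ ∧ sbjSet Λ = Γ ∧ sbjSet (φ ∩ Lout) = {A} ∧
  ∀ p ∈ l, ∃ C ∈ Γ, hat Λ p.2 = {Label.inp C p.2 p.1}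

/-- `G ref A→m1…mn:B1,…,Bn`: the ground g-choreography `G` refines the refinable action
given by initiator `A` and list `l = [(m1,B1),…,(mn,Bn)]`. -/
def Refines [Nonempty P] [Nonempty M] (G : GC P M) (A : P) (l : List (M × P)) : Prop :=
  ∃ E : ES P M, gsem G = some E ∧
    sbjSet E.minLbl = {A} ∧
    ∀ x ∈ E.MaxC, ∀ p ∈ l, ∃ C ∈ parts G,
      Label.inp C p.2 p.1 ∈ E.lbl '' (E.maxIn (E.projC x p.2))

/-! ## Multi-hole contexts -/

/-- g-choreography contexts with (numbered) holes. -/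
inductive MCtx (P M : Type) where
  | hole : ℕ → MCtx P M
  | nil : MCtx P M
  | act : P → P → M → MCtx P M
  | seq : MCtx P M → MCtx P M → MCtx P M
  | par : MCtx P M → MCtx P M → MCtx P M
  | cho : MCtx P M → MCtx P M → MCtx P M

/-- The (indices of the) holes occurring in a multi-hole context. -/
def MCtx.holes : MCtx P M → List ℕ
  | .hole i => [i]
  | .nil => []
  | .act _ _ _ => []
  | .seq c1 c2 => c1.holes ++ c2.holes
  | .par c1 c2 => c1.holes ++ c2.holes
  | .cho c1 c2 => c1.holes ++ c2.holes

/-- `C.fill g`: replace each hole `[·]i` by `g i`. -/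
def MCtx.fill : MCtx P M → (ℕ → GC P M) → GC P M
  | .hole i, g => g i
  | .nil, _ => GC.nil
  | .act a b m, _ => GC.act a b m
  | .seq c1 c2, g => GC.seq (c1.fill g) (c2.fill g)
  | .par c1 c2, g => GC.par (c1.fill g) (c2.fill g)
  | .cho c1 c2, g => GC.cho (c1.fill g) (c2.fill g)

/-- Typing of multi-hole contexts in the extended type system, where hole `i` is typed by
the axiom `(σ i).1 ⊢ [·]i : ⟨(σ i).2.1, (σ i).2.2⟩`. -/
inductive MTyping (σ : ℕ → Set P × Set (Label P M) × Set (Label P M)) :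
    Set P → MCtx P M → Set (Label P M) → Set (Label P M) → Prop where
  | hole (i : ℕ) : MTyping σ (σ i).1 (MCtx.hole i) (σ i).2.1 (σ i).2.2
  | temp : MTyping σ ∅ MCtx.nil ∅ ∅
  | tint {a b : P} {m : M} (hab : a ≠ b) :
      MTyping σ {a, b} (MCtx.act a b m)
        {Label.out a b m, Label.inp a b m} {Label.out a b m, Label.inp a b m}
  | tseq {Γ1 Γ2 : Set P} {c1 c2 : MCtx P M} {φ1 φ2 Λ1 Λ2 : Set (Label P M)} :
      MTyping σ Γ1 c1 φ1 Λ1 → MTyping σ Γ2 c2 φ2 Λ2 →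
      MTyping σ (Γ1 ∪ Γ2) (MCtx.seq c1 c2) (φ1 ∪ lminus φ2 Γ1) (Λ2 ∪ lminus Λ1 Γ2)
  | tpar {Γ1 Γ2 : Set P} {c1 c2 : MCtx P M} {φ1 φ2 Λ1 Λ2 : Set (Label P M)} :
      MTyping σ Γ1 c1 φ1 Λ1 → MTyping σ Γ2 c2 φ2 Λ2 → Γ1 ∩ Γ2 = ∅ →
      MTyping σ (Γ1 ∪ Γ2) (MCtx.par c1 c2) (φ1 ∪ φ2) (Λ1 ∪ Λ2)
  | tch {Γ : Set P} {c1 c2 : MCtx P M} {φ1 φ2 Λ1 Λ2 : Set (Label P M)} :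
      MTyping σ Γ c1 φ1 Λ1 → MTyping σ Γ c2 φ2 Λ2 → compch φ1 φ2 Γ →
      MTyping σ Γ (MCtx.cho c1 c2) (φ1 ∪ φ2) (Λ1 ∪ Λ2)


/-!
By induction on `G`: `⟦G⟧` is finite, with acyclic causality and symmetric, irreflexive,
hereditary conflict, and each of its maximal configurations has output-labelled minimal events,
input-labelled maximal events and subjects `P(G)`. The inductive steps rest on the fact that in
such a structure a configuration is maximal iff every event outside it conflicts with it. Hence a
maximal configuration of `⟦G1⟧ ⊗ ⟦G2⟧`, `⟦G1⟧ + ⟦G2⟧` or `⟦G1;G2⟧` is a disjoint union of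
embedded maximal configurations of the components (for `;`, a maximal `x1` of `⟦G1⟧` and a
maximal configuration of the copy of `⟦G2⟧` indexed by `x1`), and its minimal and maximal
events come from minimal and maximal events of the pieces. In a choice, well-branchedness makes
both branches have the same participants. Finally `⟦G⟧ ≠ ε` makes every maximal configuration
nonempty, hence it has minimal and maximal events.
-/

section Tags

@[simp] lemma tagL_inj {a b : ℕ} : tagL a = tagL b ↔ a = b := by simp [tagL]
@[simp] lemma tagR_inj {a b : ℕ} : tagR a = tagR b ↔ a = b := by simp [tagR]
@[simp] lemma tagC_inj {k k' a b : ℕ} : tagC k a = tagC k' b ↔ k = k' ∧ a = b := by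
  simp [tagC]
@[simp] lemma tagL_ne_tagR {a b : ℕ} : tagL a ≠ tagR b := by simp [tagL, tagR]
@[simp] lemma tagR_ne_tagL {a b : ℕ} : tagR a ≠ tagL b := tagL_ne_tagR.symm
@[simp] lemma tagL_ne_tagC {a k b : ℕ} : tagL a ≠ tagC k b := by simp [tagL, tagC]
@[simp] lemma tagC_ne_tagL {a k b : ℕ} : tagC k b ≠ tagL a := tagL_ne_tagC.symm

lemma tagL_injective : Function.Injective tagL := fun _ _ => tagL_inj.1
lemma tagR_injective : Function.Injective tagR := fun _ _ => tagR_inj.1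
lemma tagC_injective (k : ℕ) : Function.Injective (tagC k) := fun _ _ h => (tagC_inj.1 h).2

lemma encSet_injOn : Set.InjOn encSet {x | x.Finite} := by
  intro x (hx : x.Finite) y (hy : y.Finite) h
  rw [encSet, dif_pos hx, encSet, dif_pos hy] at h
  rw [← hx.coe_toFinset, ← hy.coe_toFinset, Finset.geomSum_injective le_rfl h]

end Tags

namespace ES

variable {E E' : ES P M}

/-- The properties of a finite prime event structure preserved by the semantics. Causality is
only asked to be acyclic (witnessed by a rank), since `esSeq` does not produce a transitive
relation. -/
structure Valid (E : ES P M) : Prop where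
  finite : E.ev.Finite
  rank : ∃ ρ : ℕ → ℕ, ∀ u v, E.le u v → u ≠ v → ρ u < ρ v
  conf_symm : ∀ u v, E.conf u v → E.conf v u
  conf_irrefl : ∀ u, ¬ E.conf u u
  conf_hered : ∀ u v w, E.conf u v → E.le v w → E.conf u w

namespace Valid

lemma minIn_nonempty (hE : E.Valid) {s : Set ℕ} (hs : s.Finite) (hne : s.Nonempty) :
    (E.minIn s).Nonempty := by
  obtain ⟨ρ, hρ⟩ := hE.rank
  obtain ⟨e, he, hmin⟩ := Set.exists_min_image s ρ hs hne
  refine ⟨e, he, fun f hf hfe => ?_⟩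
  by_contra hne
  exact (hρ f e hfe hne).not_ge (hmin f hf)

lemma maxIn_nonempty (hE : E.Valid) {s : Set ℕ} (hs : s.Finite) (hne : s.Nonempty) :
    (E.maxIn s).Nonempty := by
  obtain ⟨ρ, hρ⟩ := hE.rank
  obtain ⟨e, he, hmax⟩ := Set.exists_max_image s ρ hs hne
  refine ⟨e, he, fun f hf hef => ?_⟩
  by_contra hne
  exact (hρ e f hef (Ne.symm hne)).not_ge (hmax f hf)

lemma conf_of_reflTransGen (hE : E.Valid) {u v w : ℕ} (h : E.conf u v)
    (hvw : Relation.ReflTransGen E.le v w) : E.conf u w := by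
  induction hvw with
  | refl => exact h
  | tail _ hle ih => exact hE.conf_hered _ _ _ ih hle

lemma config_down (hE : E.Valid) (e : ℕ) :
    E.Config {f ∈ E.ev | Relation.ReflTransGen E.le f e} := by
  refine ⟨fun f hf => hf.1, fun f hf g hg hgf => ⟨hg, .head hgf hf.2⟩, ?_⟩
  intro a ha b hb hab
  have hae : E.conf e a := hE.conf_symm _ _ (hE.conf_of_reflTransGen hab hb.2)
  exact hE.conf_irrefl e (hE.conf_of_reflTransGen hae ha.2)

/-- Otherwise a causally minimal event of `↓e \ x` could be added to `x`. -/
lemma exists_conf_of_mem_MaxC (hE : E.Valid) {x : Set ℕ} (hx : x ∈ E.MaxC) {e : ℕ}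
    (he : e ∈ E.ev) (hex : e ∉ x) : ∃ f ∈ x, E.conf e f := by
  by_contra! hcompat
  obtain ⟨ρ, hρ⟩ := hE.rank
  set S := {f ∈ E.ev | f ∉ x ∧ Relation.ReflTransGen E.le f e}
  obtain ⟨f, hfS, hfmin⟩ := Set.exists_min_image S ρ (hE.finite.subset fun _ h => h.1)
    ⟨e, he, hex, .refl⟩
  have hf_compat : ∀ g ∈ x, ¬ E.conf f g := fun g hg hfg =>
    hcompat g hg (hE.conf_symm _ _ (hE.conf_of_reflTransGen (hE.conf_symm _ _ hfg) hfS.2.2))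
  have hcfg : E.Config (insert f x) := by
    refine ⟨Set.insert_subset hfS.1 hx.1.1, ?_, ?_⟩
    · rintro g (rfl | hg) h hh hhg
      · by_cases hhf : h = g
        · exact .inl hhf
        refine .inr (by_contra fun hhx => ?_)
        exact (hρ h g hhg hhf).not_ge (hfmin h ⟨hh, hhx, .head hhg hfS.2.2⟩)
      · exact .inr (hx.1.2.1 g hg h hh hhg)
    · rintro a (rfl | ha) b (rfl | hb) hab
      · exact hE.conf_irrefl _ hab
      · exact hf_compat b hb hab
      · exact hf_compat a ha (hE.conf_symm _ _ hab)
      · exact hx.1.2.2 a ha b hb hab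
  exact hfS.2.1 (hx.2 _ hcfg (Set.subset_insert f x) ▸ Set.mem_insert f x)

lemma nonempty_of_mem_MaxC (hE : E.Valid) (hne : E.ev.Nonempty) {x : Set ℕ}
    (hx : x ∈ E.MaxC) : x.Nonempty := by
  obtain ⟨e, he⟩ := hne
  by_cases hex : e ∈ x
  · exact ⟨e, hex⟩
  · obtain ⟨f, hf, -⟩ := hE.exists_conf_of_mem_MaxC hx he hex
    exact ⟨f, hf⟩

end Valid

lemma mem_MaxC_of_forall_conf {x : Set ℕ} (hx : E.Config x)
    (h : ∀ e ∈ E.ev, e ∉ x → ∃ f ∈ x, E.conf e f) : x ∈ E.MaxC := by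
  refine ⟨hx, fun y hy hxy => (Set.Subset.antisymm ?_ hxy)⟩
  intro e hey
  by_contra hex
  obtain ⟨f, hfx, hef⟩ := h e (hy.1 hey) hex
  exact hy.2.2 e hey f (hxy hfx) hef

lemma config_empty (E : ES P M) : E.Config ∅ := by
  simp [Config]

lemma exists_MaxC_superset (hfin : E.ev.Finite) {c : Set ℕ} (hc : E.Config c) :
    ∃ x ∈ E.MaxC, c ⊆ x := by
  have hT : {y | E.Config y ∧ c ⊆ y}.Finite :=
    hfin.finite_subsets.subset fun y hy => hy.1.1
  obtain ⟨x, hx, hmax⟩ := hT.exists_maximalFor id _ ⟨c, hc, subset_rfl⟩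
  exact ⟨x, ⟨hx.1, fun y hy hxy => (hmax ⟨hy, hx.2.trans hxy⟩ hxy).antisymm hxy⟩, hx.2⟩

lemma Valid.exists_mem_MaxC (hE : E.Valid) {e : ℕ} (he : e ∈ E.ev) : ∃ x ∈ E.MaxC, e ∈ x := by
  obtain ⟨x, hx, hsub⟩ := exists_MaxC_superset hE.finite (hE.config_down e)
  exact ⟨x, hx, hsub ⟨he, .refl⟩⟩

def MinOutMaxIn (E : ES P M) (x : Set ℕ) : Prop :=
  E.lbl '' E.minIn x ⊆ Lout ∧ E.lbl '' E.maxIn x ⊆ Lin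

lemma minIn_union_subset (s t : Set ℕ) : E.minIn (s ∪ t) ⊆ E.minIn s ∪ E.minIn t := by
  rintro e ⟨he | he, hmin⟩
  · exact .inl ⟨he, fun f hf => hmin f (.inl hf)⟩
  · exact .inr ⟨he, fun f hf => hmin f (.inr hf)⟩

lemma maxIn_union_subset (s t : Set ℕ) : E.maxIn (s ∪ t) ⊆ E.maxIn s ∪ E.maxIn t := by
  rintro e ⟨he | he, hmax⟩
  · exact .inl ⟨he, fun f hf => hmax f (.inl hf)⟩
  · exact .inr ⟨he, fun f hf => hmax f (.inr hf)⟩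

lemma MinOutMaxIn.union {s t : Set ℕ} (hs : E.MinOutMaxIn s) (ht : E.MinOutMaxIn t) :
    E.MinOutMaxIn (s ∪ t) := by
  refine ⟨?_, ?_⟩
  · refine (Set.image_mono (minIn_union_subset s t)).trans ?_
    rw [Set.image_union]
    exact Set.union_subset hs.1 ht.1
  · refine (Set.image_mono (maxIn_union_subset s t)).trans ?_
    rw [Set.image_union]
    exact Set.union_subset hs.2 ht.2

structure Embeds (E' E : ES P M) (t : ℕ → ℕ) : Prop where
  injective : t.Injective
  mapsTo : Set.MapsTo t E'.ev E.ev
  le_map : ∀ a ∈ E'.ev, ∀ b ∈ E'.ev, E'.le a b → E.le (t a) (t b)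
  conf_map : ∀ a ∈ E'.ev, ∀ b ∈ E'.ev, E'.conf a b → E.conf (t a) (t b)
  lbl_map : ∀ e, E.lbl (t e) = E'.lbl e

namespace Embeds

variable {t : ℕ → ℕ}

lemma lbl_image (h : Embeds E' E t) (x : Set ℕ) : E.lbl '' (t '' x) = E'.lbl '' x := by
  rw [Set.image_image]
  exact Set.image_congr fun e _ => h.lbl_map e

lemma image_minIn_subset (h : Embeds E' E t) {x : Set ℕ} (hx : x ⊆ E'.ev) :
    E.minIn (t '' x) ⊆ t '' E'.minIn x := by
  rintro _ ⟨⟨e, he, rfl⟩, hmin⟩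
  exact ⟨e, ⟨he, fun f hf hfe =>
    h.injective (hmin _ ⟨f, hf, rfl⟩ (h.le_map f (hx hf) e (hx he) hfe))⟩, rfl⟩

lemma image_maxIn_subset (h : Embeds E' E t) {x : Set ℕ} (hx : x ⊆ E'.ev) :
    E.maxIn (t '' x) ⊆ t '' E'.maxIn x := by
  rintro _ ⟨⟨e, he, rfl⟩, hmax⟩
  exact ⟨e, ⟨he, fun f hf hef =>
    h.injective (hmax _ ⟨f, hf, rfl⟩ (h.le_map e (hx he) f (hx hf) hef))⟩, rfl⟩

lemma minOutMaxIn_image (h : Embeds E' E t) {x : Set ℕ} (hx : x ⊆ E'.ev)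
    (hmm : E'.MinOutMaxIn x) : E.MinOutMaxIn (t '' x) := by
  refine ⟨?_, ?_⟩
  · refine (Set.image_mono (h.image_minIn_subset hx)).trans ?_
    rw [h.lbl_image]
    exact hmm.1
  · refine (Set.image_mono (h.image_maxIn_subset hx)).trans ?_
    rw [h.lbl_image]
    exact hmm.2

lemma config_preimage (h : Embeds E' E t) {z : Set ℕ} (hz : E.Config z) :
    E'.Config (E'.ev ∩ t ⁻¹' z) := by
  refine ⟨Set.inter_subset_left, fun e he f hf hfe => ⟨hf, ?_⟩, fun e he f hf hef => ?_⟩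
  · exact hz.2.1 _ he.2 _ (h.mapsTo hf) (h.le_map f hf e he.1 hfe)
  · exact hz.2.2 _ he.2 _ hf.2 (h.conf_map e he.1 f hf.1 hef)

lemma preimage_mem_MaxC (h : Embeds E' E t) (hE : E.Valid) {z : Set ℕ} (hz : z ∈ E.MaxC)
    (hconf : ∀ e ∈ E'.ev, ∀ u ∈ z, E.conf (t e) u → ∃ f ∈ E'.ev ∩ t ⁻¹' z, E'.conf e f) :
    E'.ev ∩ t ⁻¹' z ∈ E'.MaxC := by
  refine mem_MaxC_of_forall_conf (h.config_preimage hz.1) fun e he hez => ?_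
  have htz : t e ∉ z := fun htz => hez ⟨he, htz⟩
  obtain ⟨u, hu, hconf'⟩ := hE.exists_conf_of_mem_MaxC hz (h.mapsTo he) htz
  exact hconf e he u hu hconf'

end Embeds
end ES

section Constructions

variable {E1 E2 : ES P M}

lemma ES.Valid.esEmpty [Nonempty P] [Nonempty M] : (esEmpty : ES P M).Valid := by
  refine ⟨?_, ⟨id, ?_⟩, ?_, ?_, ?_⟩ <;> simp [Choreo.esEmpty]

lemma ES.Valid.esAct (a b : P) (m : M) : (esAct a b m).Valid := by
  refine ⟨(Set.finite_singleton 1).insert 0, ⟨id, ?_⟩, fun _ _ h => h, fun _ h => h,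
    fun _ _ _ h => h.elim⟩
  rintro u v (⟨rfl, rfl⟩ | ⟨rfl, rfl⟩ | ⟨rfl, rfl⟩) hne <;> simp_all

lemma embeds_esTensor_left : ES.Embeds E1 (esTensor E1 E2) tagL :=
  ⟨tagL_injective, fun _ he => .inl ⟨_, he, rfl⟩,
    fun a ha b hb hab => .inl ⟨a, ha, b, hb, hab, rfl, rfl⟩,
    fun a ha b hb hab => .inl ⟨a, ha, b, hb, hab, rfl, rfl⟩, fun e => by simp [esTensor, tagL]⟩

lemma embeds_esTensor_right : ES.Embeds E2 (esTensor E1 E2) tagR :=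
  ⟨tagR_injective, fun _ he => .inr ⟨_, he, rfl⟩,
    fun a ha b hb hab => .inr ⟨a, ha, b, hb, hab, rfl, rfl⟩,
    fun a ha b hb hab => .inr ⟨a, ha, b, hb, hab, rfl, rfl⟩, fun e => by simp [esTensor, tagR]⟩

lemma embeds_esSum_left : ES.Embeds E1 (esSum E1 E2) tagL :=
  let h := embeds_esTensor_left (E2 := E2)
  ⟨h.injective, h.mapsTo, h.le_map, fun a ha b hb hab => .inl (h.conf_map a ha b hb hab),
    h.lbl_map⟩

lemma embeds_esSum_right : ES.Embeds E2 (esSum E1 E2) tagR :=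
  let h := embeds_esTensor_right (E1 := E1)
  ⟨h.injective, h.mapsTo, h.le_map, fun a ha b hb hab => .inl (h.conf_map a ha b hb hab),
    h.lbl_map⟩

lemma ES.Valid.esTensor (h1 : E1.Valid) (h2 : E2.Valid) : (esTensor E1 E2).Valid := by
  obtain ⟨ρ1, hρ1⟩ := h1.rank
  obtain ⟨ρ2, hρ2⟩ := h2.rank
  refine ⟨(h1.finite.image tagL).union (h2.finite.image tagR),
    ⟨fun u => if u.unpair.1 = 0 then ρ1 u.unpair.2 else ρ2 u.unpair.2, ?_⟩, ?_, ?_, ?_⟩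
  · rintro u v (⟨e, -, f, -, hef, rfl, rfl⟩ | ⟨e, -, f, -, hef, rfl, rfl⟩) hne
    · simp only [tagL_inj, ne_eq] at hne
      simpa [tagL] using hρ1 e f hef hne
    · simp only [tagR_inj, ne_eq] at hne
      simpa [tagR] using hρ2 e f hef hne
  · rintro u v (⟨e, he, f, hf, hc, rfl, rfl⟩ | ⟨e, he, f, hf, hc, rfl, rfl⟩)
    · exact .inl ⟨f, hf, e, he, h1.conf_symm _ _ hc, rfl, rfl⟩
    · exact .inr ⟨f, hf, e, he, h2.conf_symm _ _ hc, rfl, rfl⟩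
  · rintro u (⟨e, -, f, -, hc, rfl, h⟩ | ⟨e, -, f, -, hc, rfl, h⟩)
    · exact h1.conf_irrefl e (tagL_inj.1 h ▸ hc)
    · exact h2.conf_irrefl e (tagR_inj.1 h ▸ hc)
  · rintro u v w (⟨e, he, f, -, hc, rfl, rfl⟩ | ⟨e, he, f, -, hc, rfl, rfl⟩)
      (⟨a, -, b, hb, hab, hfa, rfl⟩ | ⟨a, -, b, hb, hab, hfa, rfl⟩) <;>
      simp only [tagL_inj, tagR_inj, tagL_ne_tagR, tagR_ne_tagL] at hfa
    · exact .inl ⟨e, he, b, hb, h1.conf_hered _ _ _ hc (hfa ▸ hab), rfl, rfl⟩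
    · exact .inr ⟨e, he, b, hb, h2.conf_hered _ _ _ hc (hfa ▸ hab), rfl, rfl⟩

lemma ES.Valid.esSum (h1 : E1.Valid) (h2 : E2.Valid) : (esSum E1 E2).Valid := by
  have hT := h1.esTensor h2
  refine ⟨hT.finite, hT.rank, ?_, ?_, ?_⟩
  · rintro u v (h | ⟨e, he, f, hf, (⟨rfl, rfl⟩ | ⟨rfl, rfl⟩)⟩)
    · exact .inl (hT.conf_symm _ _ h)
    · exact .inr ⟨e, he, f, hf, .inr ⟨rfl, rfl⟩⟩
    · exact .inr ⟨e, he, f, hf, .inl ⟨rfl, rfl⟩⟩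
  · rintro u (h | ⟨e, -, f, -, (⟨rfl, h⟩ | ⟨rfl, h⟩)⟩)
    · exact hT.conf_irrefl u h
    · exact tagL_ne_tagR h
    · exact tagR_ne_tagL h
  · rintro u v w (h | ⟨e, he, f, hf, (⟨rfl, rfl⟩ | ⟨rfl, rfl⟩)⟩) hle
    · exact .inl (hT.conf_hered _ _ _ h hle)
    · rcases hle with ⟨a, -, b, -, -, hfa, rfl⟩ | ⟨a, -, b, hb, -, -, rfl⟩
      · exact absurd hfa (by simp)
      · exact .inr ⟨e, he, b, hb, .inl ⟨rfl, rfl⟩⟩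
    · rcases hle with ⟨a, -, b, hb, -, -, rfl⟩ | ⟨a, -, b, -, -, hea, rfl⟩
      · exact .inr ⟨b, hb, f, hf, .inr ⟨rfl, rfl⟩⟩
      · exact absurd hea (by simp)

end Constructions

section Seq

variable {E1 E2 : ES P M}

lemma ES.encSet_injOn_MaxC {E : ES P M} (hfin : E.ev.Finite) : Set.InjOn encSet E.MaxC :=
  fun _ hx _ hy h => encSet_injOn (hfin.subset hx.1.1) (hfin.subset hy.1.1) h

lemma embeds_esSeq_left : ES.Embeds E1 (esSeq E1 E2) tagL :=
  ⟨tagL_injective, fun _ he => .inl ⟨_, he, rfl⟩,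
    fun a ha b hb hab => .inl ⟨a, ha, b, hb, hab, rfl, rfl⟩,
    fun a ha b hb hab => .inl ⟨a, ha, b, hb, hab, rfl, rfl⟩, fun e => by simp [esSeq, tagL]⟩

lemma embeds_esSeq_right {x : Set ℕ} (hx : x ∈ E1.MaxC) :
    ES.Embeds E2 (esSeq E1 E2) (tagC (encSet x)) :=
  ⟨tagC_injective _, fun _ he => .inr ⟨x, hx, _, he, rfl⟩,
    fun a ha b hb hab => .inr (.inl ⟨x, hx, a, ha, b, hb, hab, rfl, rfl⟩),
    fun a ha b hb hab => .inr (.inl ⟨x, hx, a, ha, b, hb, hab, rfl, rfl⟩),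
    fun e => by simp [esSeq, tagC]⟩

lemma esSeq_finite (h1 : E1.ev.Finite) (h2 : E2.ev.Finite) : (esSeq E1 E2).ev.Finite := by
  have hMaxC : E1.MaxC.Finite := h1.finite_subsets.subset fun x hx => hx.1.1
  refine (h1.image tagL).union ((hMaxC.image2 (fun x e => tagC (encSet x) e) h2).subset ?_)
  rintro u ⟨x, hx, e, he, rfl⟩
  exact ⟨x, hx, e, he, rfl⟩

/-- The copies of `E2` are ranked above all of `E1`. -/
lemma esSeq_rank (h1 : E1.Valid) (h2 : E2.Valid) :
    ∃ ρ : ℕ → ℕ, ∀ u v, (esSeq E1 E2).le u v → u ≠ v → ρ u < ρ v := by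
  obtain ⟨ρ1, hρ1⟩ := h1.rank
  obtain ⟨ρ2, hρ2⟩ := h2.rank
  obtain ⟨N, hN⟩ := (h1.finite.image ρ1).bddAbove
  refine ⟨fun u => if u.unpair.1 = 0 then ρ1 u.unpair.2 else N + 1 + ρ2 u.unpair.2.unpair.2, ?_⟩
  rintro u v (⟨e, -, f, -, hef, rfl, rfl⟩ | ⟨x, -, e, -, f, -, hef, rfl, rfl⟩ |
    ⟨x, hx, e, he, f, -, -, rfl, rfl⟩) hne
  · simp only [tagL_inj, ne_eq] at hne
    simpa [tagL] using hρ1 e f hef hne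
  · simp only [tagC_inj, true_and, ne_eq] at hne
    simpa [tagC] using hρ2 e f hef hne
  · have : ρ1 e ≤ N := hN ⟨e, hx.1.1 he, rfl⟩
    simp [tagL, tagC]
    omega

lemma esSeq_conf_symm (h1 : E1.Valid) (h2 : E2.Valid) :
    ∀ u v, (esSeq E1 E2).conf u v → (esSeq E1 E2).conf v u := by
  rintro u v (⟨e, he, f, hf, hc, rfl, rfl⟩ | ⟨x, hx, e, he, f, hf, hc, rfl, rfl⟩ |
    ⟨x, hx, x', hx', hne, e, he, f, hf, rfl, rfl⟩ |
    ⟨x, hx, e, he, hce, f, hf, (⟨rfl, rfl⟩ | ⟨rfl, rfl⟩)⟩)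
  · exact .inl ⟨f, hf, e, he, h1.conf_symm _ _ hc, rfl, rfl⟩
  · exact .inr (.inl ⟨x, hx, f, hf, e, he, h2.conf_symm _ _ hc, rfl, rfl⟩)
  · exact .inr (.inr (.inl ⟨x', hx', x, hx, Ne.symm hne, f, hf, e, he, rfl, rfl⟩))
  · exact .inr (.inr (.inr ⟨x, hx, e, he, hce, f, hf, .inr ⟨rfl, rfl⟩⟩))
  · exact .inr (.inr (.inr ⟨x, hx, e, he, hce, f, hf, .inl ⟨rfl, rfl⟩⟩))

lemma esSeq_conf_irrefl (h1 : E1.Valid) (h2 : E2.Valid) : ∀ u, ¬ (esSeq E1 E2).conf u u := by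
  rintro u (⟨e, -, f, -, hc, rfl, h⟩ | ⟨x, -, e, -, f, -, hc, rfl, h⟩ |
    ⟨x, hx, x', hx', hne, e, -, f, -, rfl, h⟩ | ⟨x, -, e, -, -, f, -, (⟨rfl, h⟩ | ⟨rfl, h⟩)⟩)
  · exact h1.conf_irrefl e (tagL_inj.1 h ▸ hc)
  · exact h2.conf_irrefl e ((tagC_inj.1 h).2 ▸ hc)
  · exact hne (ES.encSet_injOn_MaxC h1.finite hx hx' (tagC_inj.1 h).1)
  · exact tagL_ne_tagC h
  · exact tagC_ne_tagL h

/-- The one subtle case: if `e` conflicts with the configuration `x` indexing a copy and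
`e` causes an event of the copy indexed by `y`, then `e ∈ y`, so `x ≠ y` and the two copies
are in conflict. -/
lemma esSeq_conf_hered (h1 : E1.Valid) (h2 : E2.Valid) :
    ∀ u v w, (esSeq E1 E2).conf u v → (esSeq E1 E2).le v w → (esSeq E1 E2).conf u w := by
  rintro u v w (⟨e, he, f, hf, hc, rfl, rfl⟩ | ⟨x, hx, e, he, f, hf, hc, rfl, rfl⟩ |
    ⟨x, hx, x', hx', hne, e, he, f, hf, rfl, rfl⟩ |
    ⟨x, hx, e, he, ⟨e', he', hce⟩, f, hf, (⟨rfl, rfl⟩ | ⟨rfl, rfl⟩)⟩)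
    (⟨a, ha, b, hb, hab, hva, rfl⟩ | ⟨y, hy, a, ha, b, hb, hab, hva, rfl⟩ |
      ⟨y, hy, a, hay, b, hb, -, hva, rfl⟩) <;>
    simp only [tagL_inj, tagC_inj, tagL_ne_tagC, tagC_ne_tagL] at hva
  · exact .inl ⟨e, he, b, hb, h1.conf_hered _ _ _ hc (hva ▸ hab), rfl, rfl⟩
  · exact .inr (.inr (.inr ⟨y, hy, e, he, ⟨a, hay, hva ▸ hc⟩, b, hb, .inl ⟨rfl, rfl⟩⟩))
  · refine .inr (.inl ⟨x, hx, e, he, b, hb, h2.conf_hered _ _ _ hc (hva.2 ▸ hab), rfl, ?_⟩)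
    rw [hva.1]
  · exact .inr (.inr (.inl ⟨x, hx, x', hx', hne, e, he, b, hb, rfl, by rw [hva.1]⟩))
  · exact .inr (.inr (.inr ⟨x, hx, e, he, ⟨e', he', hce⟩, b, hb, .inl ⟨rfl, by rw [hva.1]⟩⟩))
  · subst hva
    have hbe' : E1.conf b e' :=
      h1.conf_symm _ _ (h1.conf_hered _ _ _ (h1.conf_symm _ _ hce) hab)
    exact .inr (.inr (.inr ⟨x, hx, b, hb, ⟨e', he', hbe'⟩, f, hf, .inr ⟨rfl, rfl⟩⟩))
  · subst hva
    by_cases hxy : x = y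
    · exact absurd hce (hx.1.2.2 e (hxy ▸ hay) e' he')
    · exact .inr (.inr (.inl ⟨x, hx, y, hy, hxy, f, hf, b, hb, rfl, rfl⟩))

lemma ES.Valid.esSeq (h1 : E1.Valid) (h2 : E2.Valid) : (esSeq E1 E2).Valid :=
  ⟨esSeq_finite h1.finite h2.finite, esSeq_rank h1 h2, esSeq_conf_symm h1 h2,
    esSeq_conf_irrefl h1 h2, esSeq_conf_hered h1 h2⟩

end Seq

section MaximalConfigurations

variable {E1 E2 : ES P M} {z : Set ℕ}

lemma esTensor_mem_MaxC (h1 : E1.Valid) (h2 : E2.Valid) (hz : z ∈ (esTensor E1 E2).MaxC) :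
    ∃ x1 ∈ E1.MaxC, ∃ x2 ∈ E2.MaxC, z = tagL '' x1 ∪ tagR '' x2 := by
  have hE := h1.esTensor h2
  refine ⟨_, embeds_esTensor_left.preimage_mem_MaxC hE hz ?_,
    _, embeds_esTensor_right.preimage_mem_MaxC hE hz ?_, ?_⟩
  · rintro e - u hu (⟨a, -, b, hb, hab, hea, rfl⟩ | ⟨_, _, _, _, _, hea, _⟩)
    · obtain rfl := tagL_inj.1 hea
      exact ⟨b, ⟨hb, hu⟩, hab⟩
    · simp at hea
  · rintro e - u hu (⟨_, _, _, _, _, hea, _⟩ | ⟨a, -, b, hb, hab, hea, rfl⟩)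
    · simp at hea
    · obtain rfl := tagR_inj.1 hea
      exact ⟨b, ⟨hb, hu⟩, hab⟩
  · rw [Set.image_inter_preimage, Set.image_inter_preimage, ← Set.union_inter_distrib_right]
    exact (Set.inter_eq_right.2 hz.1.1).symm

lemma esSum_mem_MaxC (h1 : E1.Valid) (h2 : E2.Valid) (hz : z ∈ (esSum E1 E2).MaxC) :
    (∃ x1 ∈ E1.MaxC, z = tagL '' x1) ∨ ∃ x2 ∈ E2.MaxC, z = tagR '' x2 := by
  have hE := h1.esSum h2
  by_cases hR : ∃ f, tagR f ∈ z
  · obtain ⟨f0, hf0⟩ := hR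
    have hf0ev : f0 ∈ E2.ev := by
      rcases hz.1.1 hf0 with ⟨a, -, ha⟩ | ⟨a, ha, haf⟩
      · simp at ha
      · rwa [← tagR_inj.1 haf]
    have hL : ∀ e, tagL e ∉ z := fun e he => by
      rcases hz.1.1 he with ⟨a, ha, hae⟩ | ⟨a, -, hae⟩
      · obtain rfl := tagL_inj.1 hae
        exact hz.1.2.2 _ he _ hf0 (.inr ⟨a, ha, f0, hf0ev, .inl ⟨rfl, rfl⟩⟩)
      · simp at hae
    refine .inr ⟨_, embeds_esSum_right.preimage_mem_MaxC hE hz ?_, ?_⟩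
    · rintro e - u hu ((⟨_, _, _, _, _, hea, _⟩ | ⟨a, -, b, hb, hab, hea, rfl⟩) |
        ⟨a, -, b, -, (⟨hea, -⟩ | ⟨-, rfl⟩)⟩)
      · simp at hea
      · obtain rfl := tagR_inj.1 hea
        exact ⟨b, ⟨hb, hu⟩, hab⟩
      · simp at hea
      · exact absurd hu (hL a)
    · rw [Set.image_inter_preimage]
      refine (Set.inter_eq_right.2 fun u hu => ?_).symm
      rcases hz.1.1 hu with ⟨e, -, rfl⟩ | hu'
      exacts [absurd hu (hL e), hu']
  · push Not at hR
    refine .inl ⟨_, embeds_esSum_left.preimage_mem_MaxC hE hz ?_, ?_⟩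
    · rintro e - u hu ((⟨a, -, b, hb, hab, hea, rfl⟩ | ⟨_, _, _, _, _, hea, _⟩) |
        ⟨a, -, b, -, (⟨-, rfl⟩ | ⟨hea, -⟩)⟩)
      · obtain rfl := tagL_inj.1 hea
        exact ⟨b, ⟨hb, hu⟩, hab⟩
      · simp at hea
      · exact absurd hu (hR b)
      · simp at hea
    · rw [Set.image_inter_preimage]
      refine (Set.inter_eq_right.2 fun u hu => ?_).symm
      rcases hz.1.1 hu with hu' | ⟨f, -, rfl⟩
      exacts [hu', absurd hu (hR f)]

lemma esSeq_copy_index (h1 : E1.Valid) (hE : (esSeq E1 E2).Valid)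
    (hz : z ∈ (esSeq E1 E2).MaxC) {w : Set ℕ} {f : ℕ} (hw : w ∈ E1.MaxC) (hf : f ∈ E2.ev)
    (hwz : tagC (encSet w) f ∈ z) : w = E1.ev ∩ tagL ⁻¹' z := by
  have hsub : E1.ev ∩ tagL ⁻¹' z ⊆ w := by
    rintro e ⟨he, hez⟩
    by_contra hew
    obtain ⟨e', he', hee'⟩ := h1.exists_conf_of_mem_MaxC hw he hew
    exact hz.1.2.2 _ hez _ hwz
      (.inr (.inr (.inr ⟨w, hw, e, he, ⟨e', he', hee'⟩, f, hf, .inl ⟨rfl, rfl⟩⟩)))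
  refine Set.Subset.antisymm (fun e hew => ⟨hw.1.1 hew, by_contra fun hez => ?_⟩) hsub
  obtain ⟨u, hu, hconf⟩ :=
    hE.exists_conf_of_mem_MaxC hz (embeds_esSeq_left.mapsTo (hw.1.1 hew)) hez
  rcases hconf with ⟨a, -, b, hb, hab, hea, rfl⟩ | ⟨_, _, _, _, _, _, _, hea, _⟩ |
    ⟨_, _, _, _, _, _, _, _, _, hea, _⟩ |
    ⟨x, hx, a, -, ⟨e', he', hae'⟩, g, hg, (⟨hea, rfl⟩ | ⟨hea, -⟩)⟩
  · obtain rfl := tagL_inj.1 hea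
    exact hw.1.2.2 _ hew b (hsub ⟨hb, hu⟩) hab
  · simp at hea
  · simp at hea
  · obtain rfl := tagL_inj.1 hea
    by_cases hxw : x = w
    · subst hxw
      exact hx.1.2.2 _ hew _ he' hae'
    · exact hz.1.2.2 _ hu _ hwz (.inr (.inr (.inl ⟨x, hx, w, hw, hxw, g, hg, f, hf, rfl, rfl⟩)))
  · simp at hea

lemma esSeq_mem_MaxC (h1 : E1.Valid) (h2 : E2.Valid) (hz : z ∈ (esSeq E1 E2).MaxC) :
    ∃ x1 ∈ E1.MaxC, ∃ x2 ∈ E2.MaxC, z = tagL '' x1 ∪ tagC (encSet x1) '' x2 := by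
  have hE := h1.esSeq h2
  set x1 := E1.ev ∩ tagL ⁻¹' z
  have hcopy : ∀ w ∈ E1.MaxC, ∀ f ∈ E2.ev, tagC (encSet w) f ∈ z → w = x1 :=
    fun w hw f hf => esSeq_copy_index h1 hE hz hw hf
  have hx1 : x1 ∈ E1.MaxC := by
    refine embeds_esSeq_left.preimage_mem_MaxC hE hz ?_
    rintro e - u hu (⟨a, -, b, hb, hab, hea, rfl⟩ | ⟨_, _, _, _, _, _, _, hea, _⟩ |
      ⟨_, _, _, _, _, _, _, _, _, hea, _⟩ |
      ⟨x, hx, a, -, ⟨e', he', hae'⟩, g, hg, (⟨hea, rfl⟩ | ⟨hea, -⟩)⟩)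
    · obtain rfl := tagL_inj.1 hea
      exact ⟨b, ⟨hb, hu⟩, hab⟩
    · simp at hea
    · simp at hea
    · obtain rfl := tagL_inj.1 hea
      rw [hcopy x hx g hg hu] at he'
      exact ⟨e', he', hae'⟩
    · simp at hea
  have hx2 : E2.ev ∩ tagC (encSet x1) ⁻¹' z ∈ E2.MaxC := by
    refine (embeds_esSeq_right hx1).preimage_mem_MaxC hE hz ?_
    rintro e - u hu (⟨_, _, _, _, _, hea, _⟩ | ⟨x, -, a, -, b, hb, hab, hea, rfl⟩ |
      ⟨x, hx, x', hx', hne, a, -, b, hb, hea, rfl⟩ |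
      ⟨x, hx, a, ha, ⟨e', he', hae'⟩, g, -, (⟨hea, -⟩ | ⟨hea, rfl⟩)⟩)
    · simp at hea
    · obtain ⟨hk, rfl⟩ := tagC_inj.1 hea
      exact ⟨b, ⟨hb, hk ▸ hu⟩, hab⟩
    · have hxx1 : x1 = x := ES.encSet_injOn_MaxC h1.finite hx1 hx (tagC_inj.1 hea).1
      exact (hne (hxx1 ▸ hcopy x' hx' b hb hu).symm).elim
    · simp at hea
    · have hxx1 : x1 = x := ES.encSet_injOn_MaxC h1.finite hx1 hx (tagC_inj.1 hea).1
      exact (hx1.1.2.2 a ⟨ha, hu⟩ e' (hxx1 ▸ he') hae').elim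
  refine ⟨x1, hx1, _, hx2, Set.Subset.antisymm (fun u hu => ?_) ?_⟩
  · rcases hz.1.1 hu with ⟨e, he, rfl⟩ | ⟨w, hw, f, hf, rfl⟩
    · exact .inl ⟨e, ⟨he, hu⟩, rfl⟩
    · obtain rfl := hcopy w hw f hf hu
      exact .inr ⟨f, ⟨hf, hu⟩, rfl⟩
  · rintro _ (⟨e, he, rfl⟩ | ⟨f, hf, rfl⟩)
    exacts [he.2, hf.2]

end MaximalConfigurations

lemma sbjSet_union (L L' : Set (Label P M)) : sbjSet (L ∪ L') = sbjSet L ∪ sbjSet L' :=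
  Set.image_union _ _ _

namespace ES

variable {E : ES P M}

lemma Valid.proj (hE : E.Valid) (A : P) : (E.proj A).Valid := by
  obtain ⟨ρ, hρ⟩ := hE.rank
  refine ⟨hE.finite.subset fun _ h => h.1, ⟨ρ, fun u v h => hρ u v h.1⟩,
    fun u v ⟨h, hu, hv⟩ => ⟨hE.conf_symm u v h, hv, hu⟩, fun u h => hE.conf_irrefl u h.1,
    fun u v w ⟨h, hu, _⟩ ⟨hle, _, hw⟩ => ⟨hE.conf_hered u v w h hle, hu, hw⟩⟩

lemma Valid.minLblP_nonempty_iff (hE : E.Valid) (B : P) :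
    (minLblP E B).Nonempty ↔ B ∈ sbjSet E.lblSet := by
  have hproj : (E.proj B).ev.Nonempty ↔ B ∈ sbjSet E.lblSet := by
    simp [ES.proj, sbjSet, ES.lblSet, Set.Nonempty]
  rw [← hproj, minLblP, minLbl, Set.image_nonempty]
  exact ⟨fun ⟨e, he⟩ => ⟨e, he.1⟩,
    fun hne => (hE.proj B).minIn_nonempty (hE.proj B).finite hne⟩

lemma Valid.sbjSet_lblSet_eq (hE : E.Valid) {S : Set P}
    (hS : ∀ x ∈ E.MaxC, sbjSet (E.lbl '' x) = S) : sbjSet E.lblSet = S := by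
  apply Set.Subset.antisymm
  · rintro _ ⟨_, ⟨e, he, rfl⟩, rfl⟩
    obtain ⟨x, hx, hex⟩ := hE.exists_mem_MaxC he
    exact hS x hx ▸ ⟨_, ⟨e, hex, rfl⟩, rfl⟩
  · obtain ⟨x, hx, -⟩ := exists_MaxC_superset hE.finite (config_empty E)
    exact hS x hx ▸ Set.image_mono (Set.image_mono hx.1.1)

end ES

lemma wb.minLblP_eq_empty_iff {E1 E2 : ES P M} (h : wb E1 E2) (B : P) :
    minLblP E1 B = ∅ ↔ minLblP E2 B = ∅ := by
  obtain ⟨A, hA, -, hpassive⟩ := h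
  by_cases hBA : B = A
  · subst hBA
    exact iff_of_false hA.1 hA.2.1
  · exact (hpassive B hBA).2.2

lemma wb.sbjSet_lblSet_eq {E1 E2 : ES P M} (h1 : E1.Valid) (h2 : E2.Valid) (h : wb E1 E2) :
    sbjSet E1.lblSet = sbjSet E2.lblSet := by
  ext B
  rw [← h1.minLblP_nonempty_iff, ← h2.minLblP_nonempty_iff, Set.nonempty_iff_ne_empty,
    Set.nonempty_iff_ne_empty]
  exact not_congr (h.minLblP_eq_empty_iff B)

structure ES.HasMinMax (E : ES P M) (S : Set P) : Prop where
  valid : E.Valid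
  minOutMaxIn : ∀ x ∈ E.MaxC, E.MinOutMaxIn x
  sbjSet_eq : ∀ x ∈ E.MaxC, sbjSet (E.lbl '' x) = S

section HasMinMax

variable {E1 E2 : ES P M} {S1 S2 : Set P}

lemma hasMinMax_esEmpty [Nonempty P] [Nonempty M] : (esEmpty : ES P M).HasMinMax ∅ := by
  have hMaxC : ∀ x ∈ (esEmpty : ES P M).MaxC, x = ∅ := fun x hx =>
    Set.subset_empty_iff.1 hx.1.1
  refine ⟨.esEmpty, fun x hx => ?_, fun x hx => ?_⟩ <;> obtain rfl := hMaxC x hx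
  · simp [ES.MinOutMaxIn, ES.minIn, ES.maxIn]
  · simp [sbjSet]

lemma hasMinMax_esAct {a b : P} (hab : a ≠ b) (m : M) : (esAct a b m).HasMinMax {a, b} := by
  have hMaxC : ∀ x ∈ (esAct a b m).MaxC, x = {0, 1} := fun x hx =>
    (hx.2 _ ⟨subset_rfl, fun _ _ _ hf _ => hf, fun _ _ _ _ h => h⟩ hx.1.1).symm
  have hle : (esAct a b m).le 0 1 := .inr (.inl ⟨rfl, rfl⟩)
  refine ⟨.esAct a b m, fun x hx => ?_, fun x hx => ?_⟩ <;> obtain rfl := hMaxC x hx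
  · constructor
    · rintro _ ⟨u, ⟨rfl | rfl, hmin⟩, rfl⟩
      · exact ⟨a, b, m, hab, rfl⟩
      · exact absurd (hmin 0 (.inl rfl) hle) (by simp)
    · rintro _ ⟨u, ⟨rfl | rfl, hmax⟩, rfl⟩
      · exact absurd (hmax 1 (.inr rfl) hle) (by simp)
      · exact ⟨a, b, m, hab, rfl⟩
  · simp [sbjSet, esAct, Set.image_insert_eq, Label.sbj]

lemma ES.HasMinMax.esTensor (h1 : E1.HasMinMax S1) (h2 : E2.HasMinMax S2) :
    (esTensor E1 E2).HasMinMax (S1 ∪ S2) := by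
  refine ⟨h1.valid.esTensor h2.valid, fun z hz => ?_, fun z hz => ?_⟩ <;>
    obtain ⟨x1, hx1, x2, hx2, rfl⟩ := esTensor_mem_MaxC h1.valid h2.valid hz
  · exact (embeds_esTensor_left.minOutMaxIn_image hx1.1.1 (h1.minOutMaxIn x1 hx1)).union
      (embeds_esTensor_right.minOutMaxIn_image hx2.1.1 (h2.minOutMaxIn x2 hx2))
  · rw [Set.image_union, embeds_esTensor_left.lbl_image, embeds_esTensor_right.lbl_image,
      sbjSet_union, h1.sbjSet_eq x1 hx1, h2.sbjSet_eq x2 hx2]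

lemma ES.HasMinMax.esSeq (h1 : E1.HasMinMax S1) (h2 : E2.HasMinMax S2) :
    (esSeq E1 E2).HasMinMax (S1 ∪ S2) := by
  refine ⟨h1.valid.esSeq h2.valid, fun z hz => ?_, fun z hz => ?_⟩ <;>
    obtain ⟨x1, hx1, x2, hx2, rfl⟩ := esSeq_mem_MaxC h1.valid h2.valid hz
  · exact (embeds_esSeq_left.minOutMaxIn_image hx1.1.1 (h1.minOutMaxIn x1 hx1)).union
      ((embeds_esSeq_right hx1).minOutMaxIn_image hx2.1.1 (h2.minOutMaxIn x2 hx2))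
  · rw [Set.image_union, embeds_esSeq_left.lbl_image, (embeds_esSeq_right hx1).lbl_image,
      sbjSet_union, h1.sbjSet_eq x1 hx1, h2.sbjSet_eq x2 hx2]

lemma ES.HasMinMax.esSum (h1 : E1.HasMinMax S1) (h2 : E2.HasMinMax S2) (hwb : wb E1 E2) :
    (esSum E1 E2).HasMinMax (S1 ∪ S2) := by
  have hS : S1 = S2 := by
    rw [← h1.valid.sbjSet_lblSet_eq h1.sbjSet_eq, ← h2.valid.sbjSet_lblSet_eq h2.sbjSet_eq,
      hwb.sbjSet_lblSet_eq h1.valid h2.valid]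
  refine ⟨h1.valid.esSum h2.valid, fun z hz => ?_, fun z hz => ?_⟩ <;>
    rcases esSum_mem_MaxC h1.valid h2.valid hz with ⟨x, hx, rfl⟩ | ⟨x, hx, rfl⟩
  · exact embeds_esSum_left.minOutMaxIn_image hx.1.1 (h1.minOutMaxIn x hx)
  · exact embeds_esSum_right.minOutMaxIn_image hx.1.1 (h2.minOutMaxIn x hx)
  · rw [embeds_esSum_left.lbl_image, h1.sbjSet_eq x hx, ← hS, Set.union_self]
  · rw [embeds_esSum_right.lbl_image, h2.sbjSet_eq x hx, hS, Set.union_self]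

end HasMinMax

section Semantics

variable [Nonempty P] [Nonempty M] {g1 g2 : GC P M} {E : ES P M}

lemma gsem_seq_eq_some (h : gsem (.seq g1 g2) = some E) :
    ∃ E1 E2, gsem g1 = some E1 ∧ gsem g2 = some E2 ∧ E = esSeq E1 E2 := by
  simp only [gsem] at h
  split at h
  · exact ⟨_, _, ‹_›, ‹_›, (Option.some.inj h).symm⟩
  · simp at h

lemma gsem_par_eq_some (h : gsem (.par g1 g2) = some E) :
    ∃ E1 E2, gsem g1 = some E1 ∧ gsem g2 = some E2 ∧ E = esTensor E1 E2 := by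
  simp only [gsem] at h
  split at h
  · split_ifs at h
    exact ⟨_, _, ‹_›, ‹_›, (Option.some.inj h).symm⟩
  · simp at h

lemma gsem_cho_eq_some (h : gsem (.cho g1 g2) = some E) :
    ∃ E1 E2, gsem g1 = some E1 ∧ gsem g2 = some E2 ∧ wb E1 E2 ∧ E = esSum E1 E2 := by
  simp only [gsem] at h
  split at h
  · split_ifs at h with hwb
    exact ⟨_, _, ‹_›, ‹_›, hwb, (Option.some.inj h).symm⟩
  · simp at h

theorem gsem_hasMinMax {G : GC P M} (h : gsem G = some E) : E.HasMinMax (parts G) := by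
  induction G generalizing E with
  | nil =>
    obtain rfl := Option.some.inj h.symm
    exact hasMinMax_esEmpty
  | act a b m =>
    by_cases hab : a = b
    · simp [gsem, hab] at h
    · simp only [gsem, if_neg hab, Option.some.injEq] at h
      exact h ▸ hasMinMax_esAct hab m
  | seq g1 g2 ih1 ih2 =>
    obtain ⟨E1, E2, h1, h2, rfl⟩ := gsem_seq_eq_some h
    exact (ih1 h1).esSeq (ih2 h2)
  | par g1 g2 ih1 ih2 =>
    obtain ⟨E1, E2, h1, h2, rfl⟩ := gsem_par_eq_some h
    exact (ih1 h1).esTensor (ih2 h2)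
  | cho g1 g2 ih1 ih2 =>
    obtain ⟨E1, E2, h1, h2, hwb, rfl⟩ := gsem_cho_eq_some h
    exact (ih1 h1).esSum (ih2 h2) hwb

end Semantics

/-- Lemma (min-max): for a ground well-formed `G` with `⟦G⟧ ≠ ε` and any maximal
configuration `x` of `⟦G⟧`: (1) the minimal events of `x` are nonempty with output
labels, the maximal events of `x` are nonempty with input labels; (2) the subjects of
the labels of `x` are exactly `P(G)`. -/
theorem min_max_lemma {P M : Type} [Infinite P] [Infinite M]
    {G : GC P M} {E : ES P M}
    (hsem : gsem G = some E) (hne : E.ev ≠ ∅) :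
    ∀ x ∈ E.MaxC,
      (E.minIn x ≠ ∅ ∧ E.lbl '' E.minIn x ⊆ Lout ∧
        E.maxIn x ≠ ∅ ∧ E.lbl '' E.maxIn x ⊆ Lin) ∧
      sbjSet (E.lbl '' x) = parts G := by
  intro x hx
  have hE := gsem_hasMinMax hsem
  have hxfin : x.Finite := hE.valid.finite.subset hx.1.1
  have hxne : x.Nonempty :=
    hE.valid.nonempty_of_mem_MaxC (Set.nonempty_iff_ne_empty.2 hne) hx
  obtain ⟨hmin, hmax⟩ := hE.minOutMaxIn x hx
  exact ⟨⟨(hE.valid.minIn_nonempty hxfin hxne).ne_empty, hmin,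
    (hE.valid.maxIn_nonempty hxfin hxne).ne_empty, hmax⟩, hE.sbjSet_eq x hx⟩

end Choreo
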